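/- Let a ∈ ℂ, and let L_8^a be the 7-dimensional complex Lie algebra with basis x_1, …, x_7 and non-trivial brackets [x_1,x_2]=x_3, [x_1,x_3]=x_4, [x_2,x_6]=−x_2, [x_2,x_7]=−x_4, [x_3,x_6]=−x_3, [x_4,x_6]=−x_4, [x_5,x_6]=−a·x_5, [x_5,x_7]=−x_5. For x ∈ ℂ^7 let A_x be the 7×7 skew-symmetric matrix with (i,j) entry Σ_k c_{ij}^k x_k, where c_{ij}^k are the structure constants of L_8^a, and let R = max_{y ∈ ℂ^7} rank A_y. Then there exists a nonzero polynomial F in 14 variables over ℂ such that for every (x, a') ∈ ℂ^7 × ℂ^7 with F(x, a') ≠ 0 and every (α, β) ∈ ℂ² with (α, β) ≠ (0, 0), one has rank(αA_x + βA_{a'}) = R. (Hence the generic pencil has no Jordan blocks, i.e. L_8^a is of Kronecker type.) -/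
import Mathlib

open Matrix

set_option maxRecDepth 4000
set_option maxHeartbeats 1000000

noncomputable section

/-- The skew-symmetric matrix `A_x` (with `(i,j)` entry `Σ_k c_ij^k x_k`) of the
7-dimensional complex Lie algebra `L8` with non-trivial brackets
`[x₁,x₂]=x₃, [x₁,x₃]=x₄, [x₂,x₆]=-x₂, [x₂,x₇]=-x₄, [x₃,x₆]=-x₃, [x₄,x₆]=-x₄, [x₅,x₆]=-a·x₅, [x₅,x₇]=-x₅`. -/
def L8mat (a : ℂ) (x : Fin 7 → ℂ) : Matrix (Fin 7) (Fin 7) ℂ :=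
  !![0, x 2, x 3, 0, 0, 0, 0;
     -x 2, 0, 0, 0, 0, -x 1, -x 3;
     -x 3, 0, 0, 0, 0, -x 2, 0;
     0, 0, 0, 0, 0, -x 3, 0;
     0, 0, 0, 0, 0, -a * x 4, -x 4;
     0, x 1, x 2, x 3, a * x 4, 0, 0;
     0, x 3, 0, 0, x 4, 0, 0]

private lemma f75 : (5 : Fin 7) = Fin.succ 4 := rfl
private lemma f76 : (6 : Fin 7) = Fin.succ 5 := rfl
private lemma f65 : (5 : Fin 6) = Fin.succ 4 := rfl

private lemma L8skew (a : ℂ) (y : Fin 7 → ℂ) : (L8mat a y)ᵀ = -L8mat a y := by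
  ext i j
  fin_cases i <;> fin_cases j <;>
    simp [L8mat, f75, f76, f65, Matrix.cons_val_succ, Matrix.vecHead, Matrix.vecTail,
      Matrix.transpose_apply, Matrix.neg_apply]

private lemma det_skew0 (M : Matrix (Fin 7) (Fin 7) ℂ) (h : Mᵀ = -M) : M.det = 0 := by
  have key : M.det = -M.det := by
    conv_lhs => rw [← Matrix.det_transpose M, h, Matrix.det_neg M]
    norm_num
  linear_combination key / 2

private lemma L8det (a : ℂ) (y : Fin 7 → ℂ) : (L8mat a y).det = 0 :=
  det_skew0 _ (L8skew a y)

private lemma L8rank_le (a : ℂ) (y : Fin 7 → ℂ) : (L8mat a y).rank ≤ 6 := by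
  obtain ⟨v, hv0, hv⟩ := (Matrix.exists_mulVec_eq_zero_iff.2 (L8det a y))
  have hker : v ∈ LinearMap.ker (L8mat a y).mulVecLin := by
    simpa [Matrix.mulVecLin] using hv
  have hrn := LinearMap.finrank_range_add_finrank_ker (L8mat a y).mulVecLin
  have hk : 0 < Module.finrank ℂ (LinearMap.ker (L8mat a y).mulVecLin) := by
    rw [Module.finrank_pos_iff]
    exact nontrivial_of_ne ⟨v, hker⟩ 0 (by simp [hv0])
  have hcard : Module.finrank ℂ (Fin 7 → ℂ) = 7 := by simp
  rw [hcard] at hrn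
  unfold Matrix.rank
  omega

private lemma rank_sub_le (M : Matrix (Fin 7) (Fin 7) ℂ) (f g : Fin 6 → Fin 7) :
    (M.submatrix f g).rank ≤ M.rank := by
  have h1 : ((1 : Matrix (Fin 7) (Fin 7) ℂ).submatrix f (Equiv.refl (Fin 7))) * M
      = M.submatrix f id := by
    rw [Matrix.one_submatrix_mul]; rfl
  have h2 : (M.submatrix f id) * ((1 : Matrix (Fin 7) (Fin 7) ℂ).submatrix (Equiv.refl (Fin 7)) g)
      = M.submatrix f g := by
    rw [Matrix.mul_submatrix_one]; simp
  calc (M.submatrix f g).rank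
      = (((1 : Matrix (Fin 7) (Fin 7) ℂ).submatrix f (Equiv.refl (Fin 7))) * M
        * ((1 : Matrix (Fin 7) (Fin 7) ℂ).submatrix (Equiv.refl (Fin 7)) g)).rank := by
        rw [h1, h2]
    _ ≤ (((1 : Matrix (Fin 7) (Fin 7) ℂ).submatrix f (Equiv.refl (Fin 7))) * M).rank :=
        Matrix.rank_mul_le_left _ _
    _ ≤ M.rank := Matrix.rank_mul_le_right _ _

private lemma rank_ge_of_minor (M : Matrix (Fin 7) (Fin 7) ℂ) (f : Fin 6 → Fin 7)
    (B : Matrix (Fin 6) (Fin 6) ℂ) (h : (M.submatrix f f) * B = 1) : 6 ≤ M.rank := by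
  have hu : IsUnit (M.submatrix f f) :=
    ⟨⟨M.submatrix f f, B, h, mul_eq_one_comm.mp h⟩, rfl⟩
  have h6 := Matrix.rank_of_isUnit _ hu
  have hle := rank_sub_le M f f
  rw [h6] at hle
  simpa using hle

private lemma L8minor1 (a : ℂ) (z : Fin 7 → ℂ) :
    ((L8mat a z).submatrix ![0,1,2,3,5,6] ![0,1,2,3,5,6]) =
    !![0, z 2, z 3, 0, 0, 0;
       -z 2, 0, 0, 0, -z 1, -z 3;
       -z 3, 0, 0, 0, -z 2, 0;
       0, 0, 0, 0, -z 3, 0;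
       0, z 1, z 2, z 3, 0, 0;
       0, z 3, 0, 0, 0, 0] := by
  ext i j
  fin_cases i <;> fin_cases j <;>
    simp [L8mat, f75, f76, f65, Matrix.cons_val_succ, Matrix.vecHead, Matrix.vecTail,
      Matrix.submatrix_apply]

private lemma inv6_1 (z1 z2 z3 : ℂ) (h3 : z3 ≠ 0) :
    (!![0, z2, z3, 0, 0, 0;
       -z2, 0, 0, 0, -z1, -z3;
       -z3, 0, 0, 0, -z2, 0;
       0, 0, 0, 0, -z3, 0;
       0, z1, z2, z3, 0, 0;
       0, z3, 0, 0, 0, 0] : Matrix (Fin 6) (Fin 6) ℂ) *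
    !![0, 0, -1/z3, z2/z3^2, 0, 0;
       0, 0, 0, 0, 0, 1/z3;
       1/z3, 0, 0, 0, 0, -z2/z3^2;
       -z2/z3^2, 0, 0, 0, 1/z3, (z2^2 - z1*z3)/z3^3;
       0, 0, 0, -1/z3, 0, 0;
       0, -1/z3, z2/z3^2, (-z2^2+z1*z3)/z3^3, 0, 0] = 1 := by
  ext i j
  fin_cases i <;> fin_cases j <;>
    (simp [Matrix.mul_apply, Fin.sum_univ_succ, Matrix.cons_val_succ, f65,
      Matrix.vecHead, Matrix.vecTail, Matrix.one_apply]
     <;> field_simp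
     <;> ring)

private lemma L8rank_ge1 (a : ℂ) (z : Fin 7 → ℂ) (h3 : z 3 ≠ 0) : 6 ≤ (L8mat a z).rank := by
  apply rank_ge_of_minor _ ![0,1,2,3,5,6]
    !![0, 0, -1/z 3, z 2/z 3^2, 0, 0;
       0, 0, 0, 0, 0, 1/z 3;
       1/z 3, 0, 0, 0, 0, -z 2/z 3^2;
       -z 2/z 3^2, 0, 0, 0, 1/z 3, ((z 2)^2 - z 1*z 3)/(z 3)^3;
       0, 0, 0, -1/z 3, 0, 0;
       0, -1/z 3, z 2/z 3^2, (-(z 2)^2+z 1*z 3)/(z 3)^3, 0, 0]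
  rw [L8minor1]
  exact inv6_1 (z 1) (z 2) (z 3) h3

private lemma L8minor2 (a : ℂ) (z : Fin 7 → ℂ) (h3 : z 3 = 0) :
    ((L8mat a z).submatrix ![0,1,2,4,5,6] ![0,1,2,4,5,6]) =
    !![0, z 2, 0, 0, 0, 0;
       -z 2, 0, 0, 0, -z 1, 0;
       0, 0, 0, 0, -z 2, 0;
       0, 0, 0, 0, -a * z 4, -z 4;
       0, z 1, z 2, a * z 4, 0, 0;
       0, 0, 0, z 4, 0, 0] := by
  ext i j
  fin_cases i <;> fin_cases j <;>
    simp [L8mat, f75, f76, f65, Matrix.cons_val_succ, Matrix.vecHead, Matrix.vecTail,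
      Matrix.submatrix_apply, h3]

private lemma inv6_2 (a z1 z2 z4 : ℂ) (h2 : z2 ≠ 0) (h4 : z4 ≠ 0) :
    (!![0, z2, 0, 0, 0, 0;
       -z2, 0, 0, 0, -z1, 0;
       0, 0, 0, 0, -z2, 0;
       0, 0, 0, 0, -a * z4, -z4;
       0, z1, z2, a * z4, 0, 0;
       0, 0, 0, z4, 0, 0] : Matrix (Fin 6) (Fin 6) ℂ) *
    !![0, -1/z2, z1/z2^2, 0, 0, 0;
       1/z2, 0, 0, 0, 0, 0;
       -z1/z2^2, 0, 0, 0, 1/z2, -a/z2;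
       0, 0, 0, 0, 0, 1/z4;
       0, 0, -1/z2, 0, 0, 0;
       0, 0, a/z2, -1/z4, 0, 0] = 1 := by
  ext i j
  fin_cases i <;> fin_cases j <;>
    (simp [Matrix.mul_apply, Fin.sum_univ_succ, Matrix.cons_val_succ, f65,
      Matrix.vecHead, Matrix.vecTail, Matrix.one_apply]
     <;> field_simp
     <;> ring)

private lemma L8rank_ge2 (a : ℂ) (z : Fin 7 → ℂ) (h3 : z 3 = 0) (h2 : z 2 ≠ 0)
    (h4 : z 4 ≠ 0) : 6 ≤ (L8mat a z).rank := by
  apply rank_ge_of_minor _ ![0,1,2,4,5,6]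
    !![0, -1/z 2, z 1/(z 2)^2, 0, 0, 0;
       1/z 2, 0, 0, 0, 0, 0;
       -z 1/(z 2)^2, 0, 0, 0, 1/z 2, -a/z 2;
       0, 0, 0, 0, 0, 1/z 4;
       0, 0, -1/z 2, 0, 0, 0;
       0, 0, a/z 2, -1/z 4, 0, 0]
  rw [L8minor2 a z h3]
  exact inv6_2 a (z 1) (z 2) (z 4) h2 h4

private lemma L8lin (a : ℂ) (x a' : Fin 7 → ℂ) (α β : ℂ) :
    α • L8mat a x + β • L8mat a a' = L8mat a (fun i => α * x i + β * a' i) := by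
  ext i j
  fin_cases i <;> fin_cases j <;>
    simp [L8mat, f75, f76, f65, Matrix.cons_val_succ, Matrix.vecHead, Matrix.vecTail,
      Matrix.add_apply, Matrix.smul_apply, smul_eq_mul] <;> ring

/-- With `R = max_y rank A_y`, there is a nonzero polynomial `F` in 14 variables such
that whenever `F(x, a') ≠ 0` and `(α, β) ≠ (0, 0)`, one has
`rank (α A_x + β A_a') = R`: the generic pencil has no Jordan blocks, i.e.
`L8` is of Kronecker type. -/
theorem L8_kronecker_type (a : ℂ) (R : ℕ)
    (hR : IsGreatest {r : ℕ | ∃ y : Fin 7 → ℂ, (L8mat a y).rank = r} R) :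
    ∃ F : MvPolynomial (Fin 7 ⊕ Fin 7) ℂ, F ≠ 0 ∧
      ∀ x a' : Fin 7 → ℂ, MvPolynomial.eval (Sum.elim x a') F ≠ 0 →
        ∀ α β : ℂ, (α, β) ≠ (0, 0) →
          (α • L8mat a x + β • L8mat a a').rank = R := by
  classical
  have hR6 : R = 6 := by
    obtain ⟨y, hy⟩ := hR.1
    have h1 : R ≤ 6 := hy ▸ L8rank_le a y
    have h2 : 6 ≤ R := by
      have hmem : (L8mat a (fun i => if i = 3 then 1 else 0)).rank ∈
          {r : ℕ | ∃ y : Fin 7 → ℂ, (L8mat a y).rank = r} := ⟨_, rfl⟩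
      have hb := hR.2 hmem
      have hge : 6 ≤ (L8mat a (fun i => if i = 3 then 1 else 0)).rank :=
        L8rank_ge1 a _ (by norm_num)
      omega
    omega
  subst hR6
  refine ⟨(MvPolynomial.X (Sum.inl 3) * MvPolynomial.X (Sum.inr 2)
      - MvPolynomial.X (Sum.inl 2) * MvPolynomial.X (Sum.inr 3))
    * (MvPolynomial.X (Sum.inl 3) * MvPolynomial.X (Sum.inr 4)
      - MvPolynomial.X (Sum.inl 4) * MvPolynomial.X (Sum.inr 3)), ?_, ?_⟩
  · intro h
    have h0 := congrArg (MvPolynomial.eval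
      (Sum.elim (fun i : Fin 7 => if i = 3 then (1:ℂ) else 0)
        (fun i : Fin 7 => if i = 2 ∨ i = 4 then (1:ℂ) else 0))) h
    simp at h0
  · intro x a' hF α β hαβ
    have hαβ' : α ≠ 0 ∨ β ≠ 0 := by
      by_contra h
      push_neg at h
      exact hαβ (by simp [h.1, h.2])
    simp only [MvPolynomial.eval_mul, MvPolynomial.eval_sub, MvPolynomial.eval_X,
      Sum.elim_inl, Sum.elim_inr, ne_eq, mul_eq_zero, not_or] at hF
    obtain ⟨d1, d2⟩ := hF
    rw [L8lin]
    set z : Fin 7 → ℂ := fun i => α * x i + β * a' i with hz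
    have hle : (L8mat a z).rank ≤ 6 := L8rank_le a z
    have hge : 6 ≤ (L8mat a z).rank := by
      by_cases h3 : z 3 = 0
      · have hz3 : α * x 3 + β * a' 3 = 0 := h3
        have key : ∀ u v : Fin 7 → ℂ, x 3 * v 3 - u 3 * a' 3 ≠ 0 → True := fun _ _ _ => trivial
        have hz2 : z 2 ≠ 0 := by
          intro h2
          have hz2' : α * x 2 + β * a' 2 = 0 := h2
          have hα : α * (x 3 * a' 2 - x 2 * a' 3) = 0 := by
            have : α * (x 3 * a' 2 - x 2 * a' 3)
                = a' 2 * (α * x 3 + β * a' 3) - a' 3 * (α * x 2 + β * a' 2) := by ring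
            rw [this, hz3, hz2']; ring
          have hα0 : α = 0 := by
            rcases mul_eq_zero.mp hα with h | h
            · exact h
            · exact absurd h d1
          have hβ : β ≠ 0 := by
            rcases hαβ' with h | h
            · exact absurd hα0 h
            · exact h
          have ha3 : a' 3 = 0 := by
            have : β * a' 3 = 0 := by rw [← hz3, hα0]; ring
            exact (mul_eq_zero.mp this).resolve_left hβ
          have ha2 : a' 2 = 0 := by
            have : β * a' 2 = 0 := by rw [← hz2', hα0]; ring
            exact (mul_eq_zero.mp this).resolve_left hβ
          exact d1 (by rw [ha2, ha3]; ring)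
        have hz4 : z 4 ≠ 0 := by
          intro h4
          have hz4' : α * x 4 + β * a' 4 = 0 := h4
          have hα : α * (x 3 * a' 4 - x 4 * a' 3) = 0 := by
            have : α * (x 3 * a' 4 - x 4 * a' 3)
                = a' 4 * (α * x 3 + β * a' 3) - a' 3 * (α * x 4 + β * a' 4) := by ring
            rw [this, hz3, hz4']; ring
          have hα0 : α = 0 := by
            rcases mul_eq_zero.mp hα with h | h
            · exact h
            · exact absurd h d2
          have hβ : β ≠ 0 := by
            rcases hαβ' with h | h
            · exact absurd hα0 h
            · exact h
          have ha3 : a' 3 = 0 := by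
            have : β * a' 3 = 0 := by rw [← hz3, hα0]; ring
            exact (mul_eq_zero.mp this).resolve_left hβ
          have ha4 : a' 4 = 0 := by
            have : β * a' 4 = 0 := by rw [← hz4', hα0]; ring
            exact (mul_eq_zero.mp this).resolve_left hβ
          exact d2 (by rw [ha3, ha4]; ring)
        exact L8rank_ge2 a z h3 hz2 hz4
      · exact L8rank_ge1 a z h3
    omega
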